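/- arXiv:2402.09549 — 4 statements merged into one kernel-verified Lean document; each statement's English description precedes it below -/
import Mathlib

section
/- The no-swap-regret menu M_NSR equals the convex hull of the set of all product CSPs x⊗e_j with x ∈ Δ_m and j ∈ BR_L(x) (i.e., j a pure best response of the learner to x). -/
open Finset

noncomputable section

/-- The product CSP `x ⊗ y`. -/
def prodCSP {m n : ℕ} (x : Fin m → ℝ) (y : Fin n → ℝ) : Fin m × Fin n → ℝ :=
  fun p => x p.1 * y p.2

/-- The `j`-th vertex `e_j` of a simplex. -/
def pureVec {k : ℕ} (j : Fin k) : Fin k → ℝ := fun j' => if j' = j then 1 else 0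

/-- Linear extension of a payoff to CSPs. -/
def linCSP {m n : ℕ} (u : Fin m → Fin n → ℝ) (φ : Fin m × Fin n → ℝ) : ℝ :=
  ∑ p : Fin m × Fin n, φ p * u p.1 p.2

/-- Payoff the learner would get by always deviating to the pure action `j'`. -/
def devCSP {m n : ℕ} (u : Fin m → Fin n → ℝ) (φ : Fin m × Fin n → ℝ) (j' : Fin n) : ℝ :=
  ∑ p : Fin m × Fin n, φ p * u p.1 j'

/-- Bilinear extension of a payoff to mixed strategies. -/
def mixPay {m n : ℕ} (u : Fin m → Fin n → ℝ) (x : Fin m → ℝ) (y : Fin n → ℝ) : ℝ :=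
  ∑ i, ∑ j, x i * y j * u i j

/-- Pure best responses of the learner to the optimizer mixed strategy `x`. -/
def BRL {m n : ℕ} (u : Fin m → Fin n → ℝ) (x : Fin m → ℝ) : Set (Fin n) :=
  {j | ∀ j' : Fin n, (∑ i, x i * u i j') ≤ ∑ i, x i * u i j}

/-- A CSP is no-regret. -/
def NoRegret {m n : ℕ} (u : Fin m → Fin n → ℝ) (φ : Fin m × Fin n → ℝ) : Prop :=
  ∀ j' : Fin n, devCSP u φ j' ≤ linCSP u φ

/-- A CSP is no-swap-regret. -/
def NoSwapRegret {m n : ℕ} (u : Fin m → Fin n → ℝ) (φ : Fin m × Fin n → ℝ) : Prop :=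
  ∀ j j' : Fin n, (∑ i, φ (i, j) * u i j') ≤ ∑ i, φ (i, j) * u i j

/-- The no-regret menu: all no-regret CSPs. -/
def MNR {m n : ℕ} (u : Fin m → Fin n → ℝ) : Set (Fin m × Fin n → ℝ) :=
  {φ | φ ∈ stdSimplex ℝ (Fin m × Fin n) ∧ NoRegret u φ}

/-- The no-swap-regret menu: all no-swap-regret CSPs. -/
def MNSR {m n : ℕ} (u : Fin m → Fin n → ℝ) : Set (Fin m × Fin n → ℝ) :=
  {φ | φ ∈ stdSimplex ℝ (Fin m × Fin n) ∧ NoSwapRegret u φ}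

/-- A menu: a closed convex subset of the simplex of CSPs such that every optimizer
mixed strategy has some product response inside the set. -/
def IsMenu {m n : ℕ} (M : Set (Fin m × Fin n → ℝ)) : Prop :=
  IsClosed M ∧ Convex ℝ M ∧ M ⊆ stdSimplex ℝ (Fin m × Fin n) ∧
    ∀ x ∈ stdSimplex ℝ (Fin m), ∃ y ∈ stdSimplex ℝ (Fin n), prodCSP x y ∈ M

/-- The learner's value when the optimizer with payoff `uO` picks their favorite point
of the menu `M`, breaking ties in the learner's favor. -/
def VL {m n : ℕ} (uL uO : Fin m → Fin n → ℝ) (M : Set (Fin m × Fin n → ℝ)) : ℝ :=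
  sSup (linCSP uL '' {φ ∈ M | ∀ ψ ∈ M, linCSP uO ψ ≤ linCSP uO φ})

/-- `M'` Pareto-dominates `M` (for the learner payoff `uL`). -/
def ParetoDominates {m n : ℕ} (uL : Fin m → Fin n → ℝ)
    (M' M : Set (Fin m × Fin n → ℝ)) : Prop :=
  (∀ uO : Fin m → Fin n → ℝ, VL uL uO M ≤ VL uL uO M') ∧
    ∃ uO : Fin m → Fin n → ℝ, VL uL uO M < VL uL uO M'

/-- A menu is Pareto-optimal if it is a menu and no menu Pareto-dominates it. -/
def ParetoOptimal {m n : ℕ} (uL : Fin m → Fin n → ℝ) (M : Set (Fin m × Fin n → ℝ)) : Prop :=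
  IsMenu M ∧ ∀ M' : Set (Fin m × Fin n → ℝ), IsMenu M' → ¬ ParetoDominates uL M' M

/-- (A2): no weakly dominated learner actions. -/
def A2cond {m n : ℕ} (u : Fin m → Fin n → ℝ) : Prop :=
  ∀ j : Fin n, (∃ x ∈ stdSimplex ℝ (Fin m), j ∈ BRL u x) →
    ∃ x' ∈ stdSimplex ℝ (Fin m), BRL u x' = {j}

/-- `U^-(M)`: the minimal learner utility over `M`. -/
def UminusVal {m n : ℕ} (u : Fin m → Fin n → ℝ) (M : Set (Fin m × Fin n → ℝ)) : ℝ :=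
  sInf (linCSP u '' M)

/-- `U^+(M)`: the maximal learner utility over `M`. -/
def UplusVal {m n : ℕ} (u : Fin m → Fin n → ℝ) (M : Set (Fin m × Fin n → ℝ)) : ℝ :=
  sSup (linCSP u '' M)

/-- `M^-`: the set of learner-utility-minimizing points of `M`. -/
def MminusSet {m n : ℕ} (u : Fin m → Fin n → ℝ) (M : Set (Fin m × Fin n → ℝ)) :
    Set (Fin m × Fin n → ℝ) :=
  {φ ∈ M | linCSP u φ = UminusVal u M}

/-- `M^+`: the set of learner-utility-maximizing points of `M`. -/
def MplusSet {m n : ℕ} (u : Fin m → Fin n → ℝ) (M : Set (Fin m × Fin n → ℝ)) :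
    Set (Fin m × Fin n → ℝ) :=
  {φ ∈ M | linCSP u φ = UplusVal u M}

/-- The zero-sum value `U_ZS = min_x max_y u_L(x,y)`. -/
def UZSval {m n : ℕ} (u : Fin m → Fin n → ℝ) : ℝ :=
  sInf ((fun x => sSup ((fun y => mixPay u x y) '' stdSimplex ℝ (Fin n))) ''
    stdSimplex ℝ (Fin m))

section Aux
variable {m n : ℕ}

lemma exists_BR (hn : 0 < n) (u : Fin m → Fin n → ℝ) (x : Fin m → ℝ) :
    ∃ j : Fin n, j ∈ BRL u x := by
  haveI : Nonempty (Fin n) := ⟨⟨0, hn⟩⟩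
  obtain ⟨j, hj⟩ := Finite.exists_max (fun j : Fin n => ∑ i, x i * u i j)
  exact ⟨j, fun j' => hj j'⟩

lemma prod_mem_MNSR (u : Fin m → Fin n → ℝ) {x : Fin m → ℝ} (hx : x ∈ stdSimplex ℝ (Fin m))
    {j : Fin n} (hj : j ∈ BRL u x) : prodCSP x (pureVec j) ∈ MNSR u := by
  refine ⟨⟨fun p => mul_nonneg (hx.1 p.1) (by unfold pureVec; positivity), ?_⟩, ?_⟩
  · rw [Fintype.sum_prod_type]
    have : ∀ i : Fin m, ∑ j' : Fin n, prodCSP x (pureVec j) (i, j') = x i := by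
      intro i
      simp [prodCSP, pureVec, Finset.sum_ite_eq', mul_ite]
    simp only [this]
    exact hx.2
  · intro j₀ j'
    by_cases h : j₀ = j
    · subst h
      simpa [prodCSP, pureVec, mul_assoc] using hj j'
    · simp [prodCSP, pureVec, h]

lemma convex_MNSR (u : Fin m → Fin n → ℝ) : Convex ℝ (MNSR u) := by
  intro φ hφ ψ hψ a b ha hb hab
  refine ⟨(convex_stdSimplex ℝ _) hφ.1 hψ.1 ha hb hab, ?_⟩
  intro j j'
  have h1 := hφ.2 j j'
  have h2 := hψ.2 j j'
  simp only [Pi.add_apply, Pi.smul_apply, smul_eq_mul, add_mul, mul_assoc,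
    Finset.sum_add_distrib, ← Finset.mul_sum]
  exact add_le_add (mul_le_mul_of_nonneg_left h1 ha) (mul_le_mul_of_nonneg_left h2 hb)

end Aux

/-- The no-swap-regret menu `M_NSR` equals the convex hull of the set of all
product CSPs `x ⊗ e_j` with `x ∈ Δ_m` and `j ∈ BR_L(x)`. -/
theorem nsr_menu_eq_convexHull_bestResponses
    (m n : ℕ) (hm : 0 < m) (hn : 0 < n)
    (uL : Fin m → Fin n → ℝ) (hbound : ∀ i j, uL i j ∈ Set.Icc (-1 : ℝ) 1) :
    MNSR uL = convexHull ℝ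
      {φ : Fin m × Fin n → ℝ |
        ∃ x ∈ stdSimplex ℝ (Fin m), ∃ j ∈ BRL uL x, φ = prodCSP x (pureVec j)} := by
  set S : Set (Fin m × Fin n → ℝ) :=
    {φ : Fin m × Fin n → ℝ |
        ∃ x ∈ stdSimplex ℝ (Fin m), ∃ j ∈ BRL uL x, φ = prodCSP x (pureVec j)} with hS
  apply le_antisymm
  · -- MNSR ⊆ convexHull S
    intro φ hφ
    obtain ⟨⟨hpos, hsum⟩, hnsr⟩ := hφ
    -- weights
    set p : Fin n → ℝ := fun j => ∑ i, φ (i, j) with hp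
    have hpnn : ∀ j, 0 ≤ p j := fun j => Finset.sum_nonneg fun i _ => hpos (i, j)
    have hpsum : ∑ j, p j = 1 := by
      rw [← hsum, Fintype.sum_prod_type_right]
    -- a default element of S
    have hS0 : ∃ z, z ∈ S := by
      have hx : pureVec (⟨0, hm⟩ : Fin m) ∈ stdSimplex ℝ (Fin m) := by
        constructor
        · intro i; unfold pureVec; positivity
        · simp [pureVec]
      obtain ⟨j0, hj0⟩ := exists_BR hn uL (pureVec (⟨0, hm⟩ : Fin m))
      exact ⟨_, ⟨_, hx, j0, hj0, rfl⟩⟩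
    obtain ⟨z0, hz0⟩ := hS0
    -- points
    set xx : Fin n → Fin m → ℝ := fun j i => φ (i, j) / p j with hxx
    set z : Fin n → (Fin m × Fin n → ℝ) := fun j =>
      if p j = 0 then z0 else prodCSP (xx j) (pureVec j) with hz
    have hzS : ∀ j, z j ∈ S := by
      intro j
      by_cases h : p j = 0
      · simpa [hz, h] using hz0
      · have hppos : 0 < p j := lt_of_le_of_ne (hpnn j) (Ne.symm h)
        have hxmem : xx j ∈ stdSimplex ℝ (Fin m) := by
          constructor
          · intro i; exact div_nonneg (hpos (i, j)) (hpnn j)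
          · simp only [hxx, ← Finset.sum_div]
            exact div_self h
        have hbr : j ∈ BRL uL (xx j) := by
          intro j'
          have := hnsr j j'
          have hstep : ∀ j'' : Fin n, ∑ i, xx j i * uL i j'' = (∑ i, φ (i, j) * uL i j'') / p j := by
            intro j''
            rw [Finset.sum_div]
            exact Finset.sum_congr rfl fun i _ => by rw [hxx]; ring
          rw [hstep, hstep]
          gcongr
        simp only [hz, if_neg h]
        exact ⟨_, hxmem, j, hbr, rfl⟩
    have hrow0 : ∀ j, p j = 0 → ∀ i, φ (i, j) = 0 := by
      intro j hj i
      have := (Finset.sum_eq_zero_iff_of_nonneg (fun i _ => hpos (i, j))).mp hj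
      exact this i (Finset.mem_univ i)
    have hdecomp : ∑ j : Fin n, p j • z j = φ := by
      funext q
      obtain ⟨i, j₀⟩ := q
      rw [Finset.sum_apply]
      rw [Finset.sum_eq_single j₀]
      · by_cases h : p j₀ = 0
        · rw [Pi.smul_apply, h, hrow0 j₀ h i, zero_smul]
        · simp only [hz, if_neg h, Pi.smul_apply, smul_eq_mul, prodCSP, pureVec, hxx]
          simp only [if_true, mul_one]
          rw [mul_comm]
          exact div_mul_cancel₀ _ h
      · intro j _ hne
        by_cases h : p j = 0
        · simp [h]
        · simp only [hz, if_neg h, Pi.smul_apply, smul_eq_mul, prodCSP, pureVec]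
          rw [if_neg hne.symm]
          ring
      · intro h; exact absurd (Finset.mem_univ j₀) h
    rw [← hdecomp]
    exact (convex_convexHull ℝ S).sum_mem (fun j _ => hpnn j) hpsum
      (fun j _ => subset_convexHull ℝ S (hzS j))
  · exact convexHull_min (fun φ ⟨x, hx, j, hj, hφ⟩ => hφ ▸ prod_mem_MNSR uL hx hj)
      (convex_MNSR uL)
end
end

section
/- Assume (A2). Let M be a menu with M ⊆ M_NR. Then M_NSR ⊆ M. -/
open Finset

noncomputable section

/-
For `j ∈ BR_L(x)`, (A2) supplies `x'` to which `j` is the unique best response, hence also the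
unique best response to every point `(1 - t) x + t x'` with `0 < t ≤ 1`. Against such an
optimizer strategy the only no-regret product response is `e_j`, so the menu contains
`((1 - t) x + t x') ⊗ e_j` and, being closed, `x ⊗ e_j`. A no-swap-regret CSP `φ` is the convex
combination of the points `x^j ⊗ e_j`, where `x^j` is the conditional distribution of the
optimizer's action given that the learner plays `j`, and no swap regret says exactly that
`j ∈ BR_L(x^j)`.
-/

variable {m n : ℕ}

def IsStrictBR (u : Fin m → Fin n → ℝ) (x : Fin m → ℝ) (j : Fin n) : Prop :=
  ∀ j' ≠ j, ∑ i, x i * u i j' < ∑ i, x i * u i j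

lemma isStrictBR_of_BRL_eq_singleton {u : Fin m → Fin n → ℝ} {x : Fin m → ℝ} {j : Fin n}
    (h : BRL u x = {j}) : IsStrictBR u x j := by
  intro j' hj'
  have hj : j ∈ BRL u x := h ▸ rfl
  have hj'BR : j' ∉ BRL u x := by simpa [h] using hj'
  simp only [BRL, Set.mem_ofPred_eq, not_forall, not_le] at hj'BR
  obtain ⟨k, hk⟩ := hj'BR
  exact hk.trans_le (hj k)

lemma sum_smul_add_smul_mul (u : Fin m → Fin n → ℝ) (x x' : Fin m → ℝ) (t : ℝ) (j : Fin n) :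
    ∑ i, ((1 - t) • x + t • x') i * u i j
      = (1 - t) * ∑ i, x i * u i j + t * ∑ i, x' i * u i j := by
  simp only [Pi.add_apply, Pi.smul_apply, smul_eq_mul, Finset.mul_sum, ← Finset.sum_add_distrib]
  exact Finset.sum_congr rfl fun i _ => by ring

lemma IsStrictBR.smul_add_smul {u : Fin m → Fin n → ℝ} {x x' : Fin m → ℝ} {j : Fin n} {t : ℝ}
    (hx' : IsStrictBR u x' j) (hx : j ∈ BRL u x) (ht₀ : 0 < t) (ht₁ : t ≤ 1) :
    IsStrictBR u ((1 - t) • x + t • x') j := by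
  intro j' hj'
  rw [sum_smul_add_smul_mul, sum_smul_add_smul_mul]
  have := mul_le_mul_of_nonneg_left (hx j') (sub_nonneg.2 ht₁)
  have := mul_lt_mul_of_pos_left (hx' j' hj') ht₀
  linarith

lemma linCSP_prodCSP (u : Fin m → Fin n → ℝ) (x : Fin m → ℝ) (y : Fin n → ℝ) :
    linCSP u (prodCSP x y) = ∑ j, y j * ∑ i, x i * u i j := by
  simp only [linCSP, prodCSP, Fintype.sum_prod_type, Finset.mul_sum]
  rw [Finset.sum_comm]
  exact Finset.sum_congr rfl fun j _ => Finset.sum_congr rfl fun i _ => by ring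

lemma devCSP_prodCSP (u : Fin m → Fin n → ℝ) (x : Fin m → ℝ) {y : Fin n → ℝ}
    (hy : ∑ j, y j = 1) (j' : Fin n) :
    devCSP u (prodCSP x y) j' = ∑ i, x i * u i j' := by
  simp only [devCSP, prodCSP, Fintype.sum_prod_type, mul_right_comm _ (y _),
    ← Finset.mul_sum, hy, mul_one]

lemma eq_pureVec_of_noRegret_prodCSP {u : Fin m → Fin n → ℝ} {x : Fin m → ℝ} {y : Fin n → ℝ}
    {j : Fin n} (hx : IsStrictBR u x j) (hy : y ∈ stdSimplex ℝ (Fin n))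
    (hNR : NoRegret u (prodCSP x y)) : y = pureVec j := by
  have hNRj := hNR j
  rw [devCSP_prodCSP u x hy.2, linCSP_prodCSP] at hNRj
  have hzero : ∀ j' ≠ j, y j' = 0 := by
    intro j₀ hj₀
    by_contra hne
    have hlt : ∑ j', y j' * ∑ i, x i * u i j' < ∑ j', y j' * ∑ i, x i * u i j := by
      refine Finset.sum_lt_sum (fun j' _ => ?_)
        ⟨j₀, Finset.mem_univ _, mul_lt_mul_of_pos_left (hx j₀ hj₀) ((hy.1 j₀).lt_of_ne' hne)⟩
      rcases eq_or_ne j' j with rfl | h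
      · rfl
      · exact mul_le_mul_of_nonneg_left (hx j' h).le (hy.1 j')
    rw [← Finset.sum_mul, hy.2, one_mul] at hlt
    linarith
  have hj : y j = 1 := by
    rw [← hy.2, Finset.sum_eq_single j (fun j' _ => hzero j') (by simp)]
  funext j'
  rcases eq_or_ne j' j with rfl | h
  · simp [pureVec, hj]
  · simp [pureVec, h, hzero j' h]

lemma prodCSP_pureVec_mem_of_isStrictBR {u : Fin m → Fin n → ℝ} {M : Set (Fin m × Fin n → ℝ)}
    (hM : IsMenu M) (hsub : M ⊆ MNR u) {x : Fin m → ℝ} (hx : x ∈ stdSimplex ℝ (Fin m))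
    {j : Fin n} (hj : IsStrictBR u x j) : prodCSP x (pureVec j) ∈ M := by
  obtain ⟨y, hy, hyM⟩ := hM.2.2.2 x hx
  rwa [← eq_pureVec_of_noRegret_prodCSP hj hy (hsub hyM).2]

lemma prodCSP_pureVec_mem_of_mem_BRL {u : Fin m → Fin n → ℝ} (hA2 : A2cond u)
    {M : Set (Fin m × Fin n → ℝ)} (hM : IsMenu M) (hsub : M ⊆ MNR u) {x : Fin m → ℝ}
    (hx : x ∈ stdSimplex ℝ (Fin m)) {j : Fin n} (hj : j ∈ BRL u x) :
    prodCSP x (pureVec j) ∈ M := by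
  obtain ⟨x', hx', hx'j⟩ := hA2 j ⟨x, hx, hj⟩
  set f : ℝ → Fin m × Fin n → ℝ := fun t => prodCSP ((1 - t) • x + t • x') (pureVec j)
  have hf : Continuous f := continuous_pi fun p => by
    simp only [f, prodCSP, Pi.add_apply, Pi.smul_apply, smul_eq_mul]
    fun_prop
  have h0 : (0 : ℝ) ∈ closure (Set.Ioc 0 1) := by
    rw [closure_Ioc zero_ne_one]
    exact ⟨le_rfl, zero_le_one⟩
  have hmaps : Set.MapsTo f (Set.Ioc 0 1) M := fun t ⟨ht₀, ht₁⟩ =>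
    prodCSP_pureVec_mem_of_isStrictBR hM hsub
      (convex_stdSimplex ℝ (Fin m) hx hx' (sub_nonneg.2 ht₁) ht₀.le (by ring))
      ((isStrictBR_of_BRL_eq_singleton hx'j).smul_add_smul hj ht₀ ht₁)
  simpa [f, hM.1.closure_eq] using map_mem_closure hf h0 hmaps

def learnerMarginal (φ : Fin m × Fin n → ℝ) (j : Fin n) : ℝ := ∑ i, φ (i, j)

/-- The paper's `x^j`; it is `0` when `learnerMarginal φ j = 0`, since `a / 0 = 0`. -/
def optimizerConditional (φ : Fin m × Fin n → ℝ) (j : Fin n) : Fin m → ℝ :=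
  fun i => φ (i, j) / learnerMarginal φ j

lemma sum_learnerMarginal {φ : Fin m × Fin n → ℝ} (hφ : φ ∈ stdSimplex ℝ (Fin m × Fin n)) :
    ∑ j, learnerMarginal φ j = 1 := by
  rw [← hφ.2, Fintype.sum_prod_type, Finset.sum_comm]
  rfl

lemma learnerMarginal_nonneg {φ : Fin m × Fin n → ℝ} (hφ : ∀ p, 0 ≤ φ p) (j : Fin n) :
    0 ≤ learnerMarginal φ j :=
  Finset.sum_nonneg fun i _ => hφ (i, j)

lemma optimizerConditional_mem_stdSimplex {φ : Fin m × Fin n → ℝ} (hφ : ∀ p, 0 ≤ φ p)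
    {j : Fin n} (hj : learnerMarginal φ j ≠ 0) :
    optimizerConditional φ j ∈ stdSimplex ℝ (Fin m) :=
  ⟨fun i => div_nonneg (hφ (i, j)) (learnerMarginal_nonneg hφ j),
    by simp only [optimizerConditional, ← Finset.sum_div]; exact div_self hj⟩

lemma mem_BRL_optimizerConditional {u : Fin m → Fin n → ℝ} {φ : Fin m × Fin n → ℝ}
    (hφ : ∀ p, 0 ≤ φ p) (hNSR : NoSwapRegret u φ) (j : Fin n) :
    j ∈ BRL u (optimizerConditional φ j) := by
  intro j'
  simp only [optimizerConditional, div_mul_eq_mul_div, ← Finset.sum_div]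
  exact div_le_div_of_nonneg_right (hNSR j j') (learnerMarginal_nonneg hφ j)

lemma sum_learnerMarginal_smul_prodCSP {φ : Fin m × Fin n → ℝ} (hφ : ∀ p, 0 ≤ φ p) :
    ∑ j, learnerMarginal φ j • prodCSP (optimizerConditional φ j) (pureVec j) = φ := by
  funext ⟨i, j⟩
  simp only [Finset.sum_apply, Pi.smul_apply, smul_eq_mul, prodCSP, pureVec, mul_ite, mul_one,
    mul_zero, Finset.sum_ite_eq, Finset.mem_univ, if_true, optimizerConditional]
  by_cases hj : learnerMarginal φ j = 0
  · rw [hj, zero_mul, eq_comm]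
    exact (Finset.sum_eq_zero_iff_of_nonneg fun i _ => hφ (i, j)).1 hj i (Finset.mem_univ i)
  · field_simp

theorem nsr_menu_subset_of_no_regret_menu_general
    (m n : ℕ)
    (uL : Fin m → Fin n → ℝ)
    (hA2 : A2cond uL)
    (M : Set (Fin m × Fin n → ℝ)) (hM : IsMenu M) (hsub : M ⊆ MNR uL) :
    MNSR uL ⊆ M := by
  rintro φ ⟨hφ, hNSR⟩
  rw [← sum_learnerMarginal_smul_prodCSP hφ.1]
  simp_rw [← finsum_eq_sum_of_fintype]
  refine hM.2.1.finsum_mem (learnerMarginal_nonneg hφ.1)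
    (by rw [finsum_eq_sum_of_fintype, sum_learnerMarginal hφ]) fun j hj => ?_
  exact prodCSP_pureVec_mem_of_mem_BRL hA2 hM hsub
    (optimizerConditional_mem_stdSimplex hφ.1 hj) (mem_BRL_optimizerConditional hφ.1 hNSR j)

/-- Assume (A2). Any menu contained in the no-regret menu contains the
no-swap-regret menu. -/
theorem nsr_menu_subset_of_no_regret_menu
    (m n : ℕ) (hm : 0 < m) (hn : 0 < n)
    (uL : Fin m → Fin n → ℝ) (hbound : ∀ i j, uL i j ∈ Set.Icc (-1 : ℝ) 1)
    (hA2 : A2cond uL)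
    (M : Set (Fin m × Fin n → ℝ)) (hM : IsMenu M) (hsub : M ⊆ MNR uL) :
    MNSR uL ⊆ M :=
  nsr_menu_subset_of_no_regret_menu_general m n uL hA2 M hM hsub
end
end

section
/- Let a < b be reals and let f, g : [a,b] → ℝ be distinct continuous concave functions with f(a) ≤ g(a) and f(b) = g(b). For θ ∈ [0,π] and h ∈ {f, g}, say ĥ(θ) is defined and equals x₀ ∈ [a,b] if x₀ is the unique maximizer over [a,b] of x ↦ x·cos θ + h(x)·sin θ. Then there exists θ ∈ [0,π] such that f̂(θ) and ĝ(θ) are both defined and f̂(θ) > ĝ(θ). -/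
/-!
The difference `f - g` increases somewhere on `[a, b]`. Comparing the increments of `f` and `g`
along a fine uniform grid and passing to the limit by continuity yields `c` and `h > 0` with
`g c - g (c - h) < f (c + h) - f c`. For a slope `s` strictly between these difference quotients,
concavity puts every maximizer of `f - s·x` to the right of `c` and every maximizer of `g - s·x`
to its left. Only countably many slopes have a non-unique maximizer, so `s` can be taken generic,
and the direction `θ = arctan s + π/2` turns `x cos θ + h x sin θ` into `sin θ · (h x - s x)`.
-/

open Set Filter Topology Real

section StepComparison

variable {f g : ℝ → ℝ} {x y : ℝ}

lemma grid_sub_le_sub_of_step_le {h : ℝ} (hh : 0 < h)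
    (hstep : ∀ c, x ≤ c - h → c + h ≤ y → f (c + h) - f c ≤ g c - g (c - h)) :
    ∀ k : ℕ, x + (k + 1) * h ≤ y →
      f (x + (k + 1) * h) - f (x + h) ≤ g (x + k * h) - g x := by
  intro k
  induction k with
  | zero => simp
  | succ k ih =>
    intro hk
    push_cast at hk ⊢
    have hprev := ih (by nlinarith)
    have hlast := hstep (x + (k + 1) * h) (by nlinarith) (by linarith)
    rw [show x + (k + 1) * h + h = x + (k + 1 + 1) * h by ring,
      show x + (k + 1) * h - h = x + k * h by ring] at hlast
    linarith

lemma exists_step_lt_of_sub_lt_sub (hxy : x < y)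
    (hf : ContinuousWithinAt f (Icc x y) x) (hg : ContinuousWithinAt g (Icc x y) y)
    (hD : f x - g x < f y - g y) :
    ∃ c h, 0 < h ∧ x ≤ c - h ∧ c + h ≤ y ∧ g c - g (c - h) < f (c + h) - f c := by
  by_contra! hstep
  set δ : ℕ → ℝ := fun n => (y - x) / (n + 1)
  have hδ_pos (n : ℕ) : 0 < δ n := by positivity
  have hδ_le (n : ℕ) : δ n ≤ y - x := div_le_self (by linarith) (by simp)
  have hδ_mul (n : ℕ) : (n + 1) * δ n = y - x := mul_div_cancel₀ _ (by positivity)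
  have hgrid (n : ℕ) : f y - f (x + δ n) ≤ g (y - δ n) - g x := by
    have := grid_sub_le_sub_of_step_le (hδ_pos n)
      (fun c hc hcy => hstep c _ (hδ_pos n) hc hcy) n (by linarith [hδ_mul n])
    rwa [show x + (n + 1) * δ n = y by linarith [hδ_mul n],
      show x + n * δ n = y - δ n by linarith [hδ_mul n]] at this
  have hδ : Tendsto δ atTop (𝓝 0) := by
    simpa [δ, Function.comp_def] using
      (tendsto_const_div_atTop_nhds_zero_nat (y - x)).comp (tendsto_add_atTop_nat 1)
  have hleft : Tendsto (fun n => f (x + δ n)) atTop (𝓝 (f x)) :=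
    hf.tendsto.comp <| tendsto_nhdsWithin_iff.mpr
      ⟨by simpa using tendsto_const_nhds.add hδ,
        Eventually.of_forall fun n => ⟨by linarith [hδ_pos n], by linarith [hδ_le n]⟩⟩
  have hright : Tendsto (fun n => g (y - δ n)) atTop (𝓝 (g y)) :=
    hg.tendsto.comp <| tendsto_nhdsWithin_iff.mpr
      ⟨by simpa using tendsto_const_nhds.sub hδ,
        Eventually.of_forall fun n => ⟨by linarith [hδ_le n], by linarith [hδ_pos n]⟩⟩
  have := le_of_tendsto_of_tendsto' (tendsto_const_nhds.sub hleft)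
    (hright.sub tendsto_const_nhds) hgrid
  linarith

end StepComparison

def nonuniqueMaxSlopes (S : Set ℝ) (f : ℝ → ℝ) : Set ℝ :=
  {s | ∃ p ∈ S, ∃ q ∈ S, p < q ∧
    IsMaxOn (fun x => f x - s * x) S p ∧ IsMaxOn (fun x => f x - s * x) S q}

section Concave

variable {S : Set ℝ} {f : ℝ → ℝ}

lemma ConcaveOn.sub_linear (hf : ConcaveOn ℝ S f) (s : ℝ) :
    ConcaveOn ℝ S (fun x => f x - s * x) :=
  hf.sub ((LinearMap.mul ℝ ℝ s).convexOn hf.1)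

lemma ConcaveOn.notMem_uIcc_of_isMaxOn {m u c : ℝ} (hf : ConcaveOn ℝ S f) (hm : m ∈ S)
    (hmax : IsMaxOn f S m) (hu : u ∈ S) (hcu : f c < f u) : c ∉ uIcc m u := fun hc =>
  have := hf.min_le_of_mem_segment hm hu (segment_eq_uIcc m u ▸ hc)
  (lt_min (hcu.trans_le (hmax hu)) hcu).not_ge this

/-- Two distinct maximizers of `f - s·x` span a segment of slope `s` in the graph of `f`, which
contains a pair of rational points. -/
lemma ConcaveOn.countable_nonuniqueMaxSlopes (hf : ConcaveOn ℝ S f) :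
    (nonuniqueMaxSlopes S f).Countable := by
  refine (countable_range fun r : ℚ × ℚ => slope f r.1 r.2).mono ?_
  rintro s ⟨p, hp, q, hq, hpq, hpmax, hqmax⟩
  obtain ⟨r₁, hpr₁, hr₁q⟩ := exists_rat_btwn hpq
  obtain ⟨r₂, hr₁r₂, hr₂q⟩ := exists_rat_btwn hr₁q
  have hpq_eq : f p - s * p = f q - s * q := le_antisymm (hqmax hp) (hpmax hq)
  have hflat : ∀ z ∈ Icc p q, f z - s * z = f p - s * p := fun z hz =>
    le_antisymm (hpmax (hf.1.ordConnected.out hp hq hz)) <| by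
      simpa only [← hpq_eq, min_self] using (hf.sub_linear s).min_le_of_mem_Icc hp hq hz
  have h₁ := hflat r₁ ⟨hpr₁.le, (hr₁r₂.trans hr₂q).le⟩
  have h₂ := hflat r₂ ⟨(hpr₁.trans hr₁r₂).le, hr₂q.le⟩
  refine ⟨(r₁, r₂), ?_⟩
  show slope f r₁ r₂ = s
  rw [slope_def_field, div_eq_iff (sub_pos.mpr hr₁r₂).ne']
  linarith

end Concave

lemma exists_isMaxOn_of_notMem_nonuniqueMaxSlopes {a b s : ℝ} {f : ℝ → ℝ} (hab : a ≤ b)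
    (hf : ContinuousOn f (Icc a b)) (hs : s ∉ nonuniqueMaxSlopes (Icc a b) f) :
    ∃ m ∈ Icc a b, IsMaxOn (fun x => f x - s * x) (Icc a b) m ∧
      ∀ x ∈ Icc a b, f x - s * x = f m - s * m → x = m := by
  obtain ⟨m, hm, hmax⟩ := isCompact_Icc.exists_isMaxOn (nonempty_Icc.mpr hab)
    (hf.sub (continuousOn_const.mul continuousOn_id))
  refine ⟨m, hm, hmax, fun x hx hxm => ?_⟩
  have hxmax : IsMaxOn (fun x => f x - s * x) (Icc a b) x := fun z hz => by
    simpa [hxm] using hmax hz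
  by_contra hne
  rcases lt_or_gt_of_ne hne with hlt | hlt
  · exact hs ⟨x, hx, m, hm, hlt, hxmax, hmax⟩
  · exact hs ⟨m, hm, x, hx, hlt, hmax, hxmax⟩

lemma exists_angle_of_slope (s : ℝ) :
    ∃ θ ∈ Icc 0 π, 0 < sin θ ∧
      ∀ x y : ℝ, x * cos θ + y * sin θ = sin θ * (y - s * x) := by
  refine ⟨arctan s + π / 2, ⟨by linarith [neg_pi_div_two_lt_arctan s],
    by linarith [arctan_lt_pi_div_two s]⟩, ?_, fun x y => ?_⟩
  · rw [sin_add_pi_div_two]; exact cos_arctan_pos s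
  · rw [sin_add_pi_div_two, cos_add_pi_div_two, sin_arctan, cos_arctan]
    ring

lemma isMaxOn_const_mul_of_unique {S : Set ℝ} {φ : ℝ → ℝ} {m r : ℝ} (hr : 0 < r)
    (hmax : IsMaxOn φ S m) (huniq : ∀ x ∈ S, φ x = φ m → x = m) :
    (∀ x ∈ S, r * φ x ≤ r * φ m) ∧ ∀ x ∈ S, r * φ x = r * φ m → x = m :=
  ⟨fun _ hx => mul_le_mul_of_nonneg_left (hmax hx) hr.le,
    fun x hx hxm => huniq x hx (mul_left_cancel₀ hr.ne' hxm)⟩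

lemma exists_lt_and_sub_lt_sub {a b : ℝ} {f g : ℝ → ℝ} (hab : a ≤ b)
    (hne : ¬ EqOn f g (Icc a b)) (ha : f a ≤ g a) (hb : f b = g b) :
    ∃ x ∈ Icc a b, ∃ y ∈ Icc a b, x < y ∧ f x - g x < f y - g y := by
  obtain ⟨z, hz, hfg⟩ : ∃ z ∈ Icc a b, f z ≠ g z := by simpa [EqOn, and_assoc] using hne
  rcases hfg.lt_or_gt with hlt | hgt
  · refine ⟨z, hz, b, right_mem_Icc.mpr hab, hz.2.lt_of_ne ?_, by linarith⟩
    rintro rfl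
    exact hlt.ne hb
  · refine ⟨a, left_mem_Icc.mpr hab, z, hz, hz.1.lt_of_ne ?_, by linarith⟩
    rintro rfl
    linarith

/-- For distinct continuous concave functions `f, g` on `[a,b]` with
`f(a) ≤ g(a)` and `f(b) = g(b)`, there is a direction `θ ∈ [0,π]` in which the unique
maximizers `f̂(θ)`, `ĝ(θ)` of `x ↦ x cos θ + h(x) sin θ` are both defined and satisfy
`f̂(θ) > ĝ(θ)`. -/
theorem concave_curves_direction_separation
    (a b : ℝ) (hab : a < b) (f g : ℝ → ℝ)
    (hf_cont : ContinuousOn f (Set.Icc a b)) (hg_cont : ContinuousOn g (Set.Icc a b))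
    (hf_conc : ConcaveOn ℝ (Set.Icc a b) f) (hg_conc : ConcaveOn ℝ (Set.Icc a b) g)
    (hdistinct : ¬ Set.EqOn f g (Set.Icc a b))
    (ha : f a ≤ g a) (hb : f b = g b) :
    ∃ θ ∈ Set.Icc (0 : ℝ) Real.pi, ∃ xf ∈ Set.Icc a b, ∃ xg ∈ Set.Icc a b,
      (∀ x ∈ Set.Icc a b,
        x * Real.cos θ + f x * Real.sin θ ≤ xf * Real.cos θ + f xf * Real.sin θ) ∧
      (∀ x ∈ Set.Icc a b,
        x * Real.cos θ + f x * Real.sin θ = xf * Real.cos θ + f xf * Real.sin θ → x = xf) ∧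
      (∀ x ∈ Set.Icc a b,
        x * Real.cos θ + g x * Real.sin θ ≤ xg * Real.cos θ + g xg * Real.sin θ) ∧
      (∀ x ∈ Set.Icc a b,
        x * Real.cos θ + g x * Real.sin θ = xg * Real.cos θ + g xg * Real.sin θ → x = xg) ∧
      xg < xf := by
  obtain ⟨x, hx, y, hy, hxy, hD⟩ := exists_lt_and_sub_lt_sub hab.le hdistinct ha hb
  have hxy_sub : Icc x y ⊆ Icc a b := Icc_subset_Icc hx.1 hy.2
  obtain ⟨c, h, hh, hxc, hcy, hgap⟩ := exists_step_lt_of_sub_lt_sub hxy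
    (hf_cont.mono hxy_sub x (left_mem_Icc.mpr hxy.le))
    (hg_cont.mono hxy_sub y (right_mem_Icc.mpr hxy.le)) hD
  obtain ⟨s, hs, hgs, hsf⟩ :=
    ((hf_conc.countable_nonuniqueMaxSlopes.union hg_conc.countable_nonuniqueMaxSlopes).dense_compl
      ℝ).exists_between (div_lt_div_of_pos_right hgap hh)
  rw [mem_compl_iff, mem_union, not_or] at hs
  have hfc : f c - s * c < f (c + h) - s * (c + h) := by nlinarith [(lt_div_iff₀ hh).mp hsf]
  have hgc : g c - s * c < g (c - h) - s * (c - h) := by nlinarith [(div_lt_iff₀ hh).mp hgs]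
  obtain ⟨xf, hxf, hxf_max, hxf_uniq⟩ :=
    exists_isMaxOn_of_notMem_nonuniqueMaxSlopes hab.le hf_cont hs.1
  obtain ⟨xg, hxg, hxg_max, hxg_uniq⟩ :=
    exists_isMaxOn_of_notMem_nonuniqueMaxSlopes hab.le hg_cont hs.2
  have hcxf : c < xf := not_le.mp fun hle => (hf_conc.sub_linear s).notMem_uIcc_of_isMaxOn hxf
    hxf_max (hxy_sub ⟨by linarith, hcy⟩) hfc (mem_uIcc.mpr (.inl ⟨hle, by linarith⟩))
  have hxgc : xg < c := not_le.mp fun hle => (hg_conc.sub_linear s).notMem_uIcc_of_isMaxOn hxg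
    hxg_max (hxy_sub ⟨hxc, by linarith⟩) hgc (mem_uIcc.mpr (.inr ⟨by linarith, hle⟩))
  obtain ⟨θ, hθ, hsin, hrot⟩ := exists_angle_of_slope s
  obtain ⟨hf_max, hf_uniq⟩ := isMaxOn_const_mul_of_unique hsin hxf_max hxf_uniq
  obtain ⟨hg_max, hg_uniq⟩ := isMaxOn_const_mul_of_unique hsin hxg_max hxg_uniq
  refine ⟨θ, hθ, xf, hxf, xg, hxg, ?_⟩
  simp only [hrot]
  exact ⟨hf_max, hf_uniq, hg_max, hg_uniq, hxgc.trans hcxf⟩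
end

section
/- Let M1 and M2 be distinct nonempty compact convex subsets of Δ_{mn} with M1^+ = M2^+ (equal sets of u_L-maximizing points). Suppose either (i) M2 \ M1 ≠ ∅, or (ii) M1^− = M2^−. Then there exists an optimizer payoff u_O : [m]×[n] → ℝ with V_L(M1, u_O) > V_L(M2, u_O); in particular, M2 does not Pareto-dominate M1. -/
/-! Write `h_M u = max_{φ ∈ M} u φ` for the support function `UplusVal u M`, and suppose,
for a contradiction, that `V_L(M1, ·) ≤ V_L(M2, ·)`. Since `V_L(M, u_O + r u_L)` is the right
derivative of `r ↦ h_M (u_O + r u_L)`, the gap `h_{M2} - h_{M1}` along the line `u_O + r u_L` is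
nondecreasing in `r` (a discrete form of the derivative comparison, together with boundedness of
`V_L`, suffices by telescoping). For `r → ∞` the maximisers of `u_O + r u_L` concentrate on the
face `M^+`, so `M1^+ = M2^+` forces the gap to have limit superior at most `0`, whence
`h_{M2} ≤ h_{M1}`; symmetrically, `r → -∞` and `M1^- = M2^-` give `h_{M1} ≤ h_{M2}`. By separation
of convex sets these inequalities are the inclusions `M2 ⊆ M1` and `M1 ⊆ M2`, contradicting
`M2 \ M1 ≠ ∅` or `M1 ≠ M2`. -/

open Finset

noncomputable section

variable {m n : ℕ}

section Payoffs

lemma continuous_linCSP (u : Fin m → Fin n → ℝ) : Continuous (linCSP u) :=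
  continuous_finsetSum _ fun p _ => (continuous_apply p).mul continuous_const

lemma linCSP_add (u v : Fin m → Fin n → ℝ) (φ : Fin m × Fin n → ℝ) :
    linCSP (u + v) φ = linCSP u φ + linCSP v φ := by
  simp only [linCSP, Pi.add_apply, mul_add, Finset.sum_add_distrib]

lemma linCSP_smul (r : ℝ) (u : Fin m → Fin n → ℝ) (φ : Fin m × Fin n → ℝ) :
    linCSP (r • u) φ = r * linCSP u φ := by
  simp only [linCSP, Pi.smul_apply, smul_eq_mul, Finset.mul_sum]
  exact Finset.sum_congr rfl fun p _ => by ring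

lemma linCSP_neg (u : Fin m → Fin n → ℝ) (φ : Fin m × Fin n → ℝ) :
    linCSP (-u) φ = -linCSP u φ := by
  simpa using linCSP_smul (-1) u φ

lemma linCSP_single_eq (f : (Fin m × Fin n → ℝ) →ₗ[ℝ] ℝ) :
    linCSP (fun i j => f (Pi.single (i, j) 1)) = f := by
  ext φ
  conv_rhs => rw [← Finset.univ_sum_single φ]
  simp only [linCSP, map_sum]
  refine Finset.sum_congr rfl fun p _ => ?_
  rw [← smul_eq_mul, ← map_smul]
  congr 1
  ext q
  simp [Pi.single_apply]

end Payoffs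

section SupportFunction

variable {M : Set (Fin m × Fin n → ℝ)}

lemma linCSP_le_UplusVal (hM : IsCompact M) (u : Fin m → Fin n → ℝ) {φ : Fin m × Fin n → ℝ}
    (hφ : φ ∈ M) : linCSP u φ ≤ UplusVal u M :=
  le_csSup (hM.image (continuous_linCSP u)).bddAbove (Set.mem_image_of_mem _ hφ)

lemma UplusVal_le (hne : M.Nonempty) {u : Fin m → Fin n → ℝ} {c : ℝ}
    (h : ∀ φ ∈ M, linCSP u φ ≤ c) : UplusVal u M ≤ c :=
  csSup_le (hne.image _) (Set.forall_mem_image.2 h)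

lemma mem_MplusSet_iff (hM : IsCompact M) {u : Fin m → Fin n → ℝ} {φ : Fin m × Fin n → ℝ} :
    φ ∈ MplusSet u M ↔ φ ∈ M ∧ ∀ ψ ∈ M, linCSP u ψ ≤ linCSP u φ := by
  refine ⟨fun hφ => ⟨hφ.1, fun ψ hψ => hφ.2 ▸ linCSP_le_UplusVal hM u hψ⟩,
    fun hφ => ⟨hφ.1, ?_⟩⟩
  exact (linCSP_le_UplusVal hM u hφ.1).antisymm (UplusVal_le ⟨φ, hφ.1⟩ hφ.2)

lemma isCompact_MplusSet (hM : IsCompact M) (u : Fin m → Fin n → ℝ) :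
    IsCompact (MplusSet u M) :=
  hM.inter_right (isClosed_eq (continuous_linCSP u) continuous_const)

lemma MplusSet_nonempty (hM : IsCompact M) (hne : M.Nonempty) (u : Fin m → Fin n → ℝ) :
    (MplusSet u M).Nonempty :=
  let ⟨φ, hφ, hmax⟩ := hM.exists_isMaxOn hne (continuous_linCSP u).continuousOn
  ⟨φ, (mem_MplusSet_iff hM).2 ⟨hφ, hmax⟩⟩

lemma MplusSet_neg (u : Fin m → Fin n → ℝ) : MplusSet (-u) M = MminusSet u M := by
  have himage : linCSP (-u) '' M = -(linCSP u '' M) := by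
    rw [← Set.image_neg_eq_neg, Set.image_image]
    simp only [linCSP_neg]
  ext φ
  rw [MplusSet, MminusSet, Set.mem_sep_iff, Set.mem_sep_iff, UplusVal, himage, Real.sSup_neg,
    linCSP_neg, neg_inj, UminusVal]

lemma VL_eq_UplusVal_MplusSet (hM : IsCompact M) (uL uO : Fin m → Fin n → ℝ) :
    VL uL uO M = UplusVal uL (MplusSet uO M) := by
  rw [VL, UplusVal]
  congr 2
  ext φ
  exact (mem_MplusSet_iff hM).symm

lemma exists_mem_MplusSet_linCSP_eq_VL (hM : IsCompact M) (hne : M.Nonempty)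
    (uL uO : Fin m → Fin n → ℝ) : ∃ φ ∈ MplusSet uO M, linCSP uL φ = VL uL uO M := by
  obtain ⟨φ, hφ, hφmax⟩ :=
    MplusSet_nonempty (isCompact_MplusSet hM uO) (MplusSet_nonempty hM hne uO) uL
  exact ⟨φ, hφ, hφmax.trans (VL_eq_UplusVal_MplusSet hM uL uO).symm⟩

lemma exists_abs_VL_le (hM : IsCompact M) (hne : M.Nonempty) (uL : Fin m → Fin n → ℝ) :
    ∃ C, ∀ uO, |VL uL uO M| ≤ C := by
  obtain ⟨C, hC⟩ := hM.exists_bound_of_continuousOn (continuous_linCSP uL).continuousOn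
  refine ⟨C, fun uO => ?_⟩
  obtain ⟨φ, hφ, hφVL⟩ := exists_mem_MplusSet_linCSP_eq_VL hM hne uL uO
  exact hφVL ▸ hC φ hφ.1

end SupportFunction

lemma monotone_of_mul_sub_le_sub {G v : ℝ → ℝ} {C : ℝ} (hv : ∀ r, |v r| ≤ C)
    (hstep : ∀ s t, s ≤ t → (t - s) * (v s - v t) ≤ G t - G s) : Monotone G := by
  intro s t hst
  have hdiscrete : ∀ N : ℕ, 0 < N → G s - G t ≤ 2 * C * (t - s) / N := by
    intro N hN
    set Δ := (t - s) / N with hΔ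
    have hΔ0 : 0 ≤ Δ := div_nonneg (sub_nonneg.2 hst) N.cast_nonneg
    set r : ℕ → ℝ := fun k => s + k * Δ
    have hrN : r N = t := by
      simp only [r, hΔ]
      field_simp
      ring
    have hsum := Finset.sum_le_sum fun k (_ : k ∈ Finset.range N) =>
      hstep (r k) (r (k + 1)) (by simp only [r]; push_cast; linarith)
    have hr : ∀ k, r (k + 1) - r k = Δ := fun k => by simp only [r]; push_cast; ring
    have hr0 : r 0 = s := by simp [r]
    simp only [hr] at hsum
    rw [← Finset.mul_sum, Finset.sum_range_sub' (fun k => v (r k)),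
      Finset.sum_range_sub (fun k => G (r k)), hr0, hrN] at hsum
    have hvst : -(2 * C) ≤ v s - v t := by
      linarith [abs_le.1 (hv s), abs_le.1 (hv t)]
    calc G s - G t ≤ -(Δ * (v s - v t)) := by linarith
      _ ≤ Δ * (2 * C) := by nlinarith
      _ = 2 * C * (t - s) / N := by rw [hΔ]; ring
  refine sub_nonpos.1 (ge_of_tendsto (tendsto_const_div_atTop_nhds_zero_nat (2 * C * (t - s))) ?_)
  exact Filter.eventually_atTop.2 ⟨1, hdiscrete⟩

lemma IsCompact.exists_nat_add_mul_lt {E : Type*} [TopologicalSpace E] [T2Space E] {M : Set E}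
    (hM : IsCompact M) {g v : E → ℝ} (hg : Continuous g) (hv : Continuous v)
    (hg0 : ∀ x ∈ M, g x ≤ 0) {b : ℝ} (hb : ∀ x ∈ M, g x = 0 → v x ≤ b) {ε : ℝ} (hε : 0 < ε) :
    ∃ k : ℕ, ∀ x ∈ M, v x + k * g x < b + ε := by
  let K : ℕ → Set E := fun k => M ∩ {x | b + ε ≤ v x + k * g x}
  have hK : ∀ k, IsClosed (K k) := fun k =>
    hM.isClosed.inter (isClosed_le continuous_const (hv.add (continuous_const.mul hg)))
  have hKanti : Antitone K := fun k l hkl x hx => ⟨hx.1, hx.2.trans <|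
    add_le_add_right (mul_le_mul_of_nonpos_right (Nat.cast_le.2 hkl) (hg0 x hx.1)) _⟩
  have hKempty : M ∩ ⋂ k, K k = ∅ := by
    refine Set.eq_empty_of_forall_notMem fun x ⟨hx, hxK⟩ => ?_
    have hxK : ∀ k : ℕ, b + ε ≤ v x + k * g x := fun k => (Set.mem_iInter.1 hxK k).2
    rcases (hg0 x hx).lt_or_eq with hneg | hzero
    · obtain ⟨k, hk⟩ := exists_nat_gt ((v x - b - ε) / -g x)
      rw [div_lt_iff₀ (neg_pos.2 hneg)] at hk
      linarith [hxK k]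
    · have := hxK 0
      rw [Nat.cast_zero, zero_mul, add_zero] at this
      linarith [hb x hx hzero]
  obtain ⟨k, hk⟩ := hM.elim_directed_family_closed K hK hKempty hKanti.directed_ge
  exact ⟨k, fun x hx => lt_of_not_ge fun hle => (Set.eq_empty_iff_forall_notMem.1 hk) x
    ⟨hx, hx, hle⟩⟩

def supportGap (u w : Fin m → Fin n → ℝ) (A B : Set (Fin m × Fin n → ℝ)) (r : ℝ) : ℝ :=
  UplusVal (u + r • w) A - UplusVal (u + r • w) B

section SupportGap

variable {A B : Set (Fin m × Fin n → ℝ)}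

lemma supportGap_neg (u w : Fin m → Fin n → ℝ) (r : ℝ) :
    supportGap u (-w) A B r = -supportGap u w B A (-r) := by
  simp only [supportGap, smul_neg, ← neg_smul, neg_sub]

lemma Monotone.supportGap_neg {u w : Fin m → Fin n → ℝ} (h : Monotone (supportGap u w B A)) :
    Monotone (supportGap u (-w) A B) := fun r s hrs => by
  simpa only [_root_.supportGap_neg, neg_le_neg_iff] using h (neg_le_neg hrs)

lemma supportGap_step (hA : IsCompact A) (hAne : A.Nonempty) (hB : IsCompact B)
    (hBne : B.Nonempty) {uL : Fin m → Fin n → ℝ} (hVL : ∀ u, VL uL u B ≤ VL uL u A)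
    (uO : Fin m → Fin n → ℝ) {s t : ℝ} (hst : s ≤ t) :
    (t - s) * (VL uL (uO + s • uL) B - VL uL (uO + t • uL) B) ≤
      supportGap uO uL A B t - supportGap uO uL A B s := by
  obtain ⟨φA, hφA, hφA_VL⟩ := exists_mem_MplusSet_linCSP_eq_VL hA hAne uL (uO + s • uL)
  obtain ⟨φB, hφB, hφB_VL⟩ := exists_mem_MplusSet_linCSP_eq_VL hB hBne uL (uO + t • uL)
  have hAt := linCSP_le_UplusVal hA (uO + t • uL) hφA.1
  have hBs := linCSP_le_UplusVal hB (uO + s • uL) hφB.1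
  have hAs := hφA.2
  have hBt := hφB.2
  simp only [linCSP_add, linCSP_smul] at hAt hBs hAs hBt
  have hmul := mul_le_mul_of_nonneg_left (hVL (uO + s • uL)) (sub_nonneg.2 hst)
  rw [← hφA_VL] at hmul
  rw [supportGap, supportGap, ← hφB_VL]
  linarith

lemma monotone_supportGap (hA : IsCompact A) (hAne : A.Nonempty) (hB : IsCompact B)
    (hBne : B.Nonempty) {uL : Fin m → Fin n → ℝ} (hVL : ∀ u, VL uL u B ≤ VL uL u A)
    (uO : Fin m → Fin n → ℝ) : Monotone (supportGap uO uL A B) :=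
  let ⟨_, hC⟩ := exists_abs_VL_le hB hBne uL
  monotone_of_mul_sub_le_sub (fun r => hC (uO + r • uL))
    fun _ _ => supportGap_step hA hAne hB hBne hVL uO

lemma UplusVal_le_of_monotone_supportGap (hA : IsCompact A) (hAne : A.Nonempty)
    (hB : IsCompact B) {u w : Fin m → Fin n → ℝ} (hmono : Monotone (supportGap u w A B))
    (hface : MplusSet w A ⊆ B) : UplusVal u A ≤ UplusVal u B := by
  obtain ⟨φ₀, hφ₀⟩ :=
    MplusSet_nonempty (isCompact_MplusSet hA w) (MplusSet_nonempty hA hAne w) u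
  obtain ⟨hφ₀w, hφ₀max⟩ := (mem_MplusSet_iff (isCompact_MplusSet hA w)).1 hφ₀
  refine le_of_forall_pos_le_add fun ε hε => ?_
  obtain ⟨k, hk⟩ := hA.exists_nat_add_mul_lt (g := fun φ => linCSP w φ - UplusVal w A)
    ((continuous_linCSP w).sub continuous_const)
    (continuous_linCSP u) (fun φ hφ => sub_nonpos.2 (linCSP_le_UplusVal hA w hφ))
    (fun φ hφ h0 => hφ₀max φ ⟨hφ, sub_eq_zero.1 h0⟩) hε
  have hAk : UplusVal (u + (k : ℝ) • w) A ≤ linCSP u φ₀ + k * UplusVal w A + ε :=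
    UplusVal_le hAne fun φ hφ => by
      rw [linCSP_add, linCSP_smul]
      linarith [hk φ hφ]
  have hBk := linCSP_le_UplusVal hB (u + (k : ℝ) • w) (hface hφ₀w)
  rw [linCSP_add, linCSP_smul, hφ₀w.2] at hBk
  have h0k := hmono (Nat.cast_nonneg k : (0 : ℝ) ≤ k)
  simp only [supportGap, zero_smul, add_zero] at h0k
  linarith

end SupportGap

lemma subset_of_forall_UplusVal_le {A B : Set (Fin m × Fin n → ℝ)} (hA : IsCompact A)
    (hBc : IsClosed B) (hBv : Convex ℝ B) (hBne : B.Nonempty)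
    (h : ∀ u, UplusVal u A ≤ UplusVal u B) : A ⊆ B := by
  intro ψ hψ
  by_contra hψB
  obtain ⟨f, c, hfB, hcf⟩ := geometric_hahn_banach_closed_point hBv hBc hψB
  set u : Fin m → Fin n → ℝ := fun i j => f (Pi.single (i, j) 1)
  have hf : linCSP u = f := linCSP_single_eq f.toLinearMap
  have hBf : UplusVal u B ≤ c := UplusVal_le hBne fun φ hφ => hf ▸ (hfB φ hφ).le
  have hAf : f ψ ≤ UplusVal u A := hf ▸ linCSP_le_UplusVal hA u hψ
  linarith [h u]

theorem non_dominance_of_distinct_menus_general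
    (m n : ℕ)
    (uL : Fin m → Fin n → ℝ)
    (M1 M2 : Set (Fin m × Fin n → ℝ))
    (h1c : IsCompact M1)
    (h1v : Convex ℝ M1) (h1ne : M1.Nonempty)
    (h2c : IsCompact M2)
    (h2v : Convex ℝ M2) (h2ne : M2.Nonempty)
    (hdistinct : M1 ≠ M2)
    (hplus : MplusSet uL M1 = MplusSet uL M2)
    (hcase : (M2 \ M1).Nonempty ∨ MminusSet uL M1 = MminusSet uL M2) :
    (∃ uO : Fin m → Fin n → ℝ, VL uL uO M2 < VL uL uO M1) ∧
      ¬ ParetoDominates uL M2 M1 := by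
  have hgap : ∃ uO : Fin m → Fin n → ℝ, VL uL uO M2 < VL uL uO M1 := by
    by_contra! hVL
    have hmono := monotone_supportGap h2c h2ne h1c h1ne hVL
    have h21 : M2 ⊆ M1 := subset_of_forall_UplusVal_le h2c h1c.isClosed h1v h1ne fun uO =>
      UplusVal_le_of_monotone_supportGap h2c h2ne h1c (hmono uO)
        (hplus ▸ Set.sep_subset _ _)
    rcases hcase with ⟨ψ, hψ2, hψ1⟩ | hminus
    · exact hψ1 (h21 hψ2)
    · have h12 : M1 ⊆ M2 := subset_of_forall_UplusVal_le h1c h2c.isClosed h2v h2ne fun uO =>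
        UplusVal_le_of_monotone_supportGap h1c h1ne h2c (hmono uO).supportGap_neg
          (by rw [MplusSet_neg, hminus]; exact Set.sep_subset _ _)
      exact hdistinct (h12.antisymm h21)
  obtain ⟨uO, hlt⟩ := hgap
  exact ⟨⟨uO, hlt⟩, fun hdom => (hdom.1 uO).not_gt hlt⟩

/-- non-dominance lemma. If `M1` and `M2` are distinct nonempty compact convex
subsets of the CSP simplex with the same maximum-value set, and either `M2 \ M1 ≠ ∅` or the
minimum-value sets coincide, then some optimizer payoff gives the learner strictly more in
`M1` than in `M2`; in particular `M2` does not Pareto-dominate `M1`. -/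
theorem non_dominance_of_distinct_menus
    (m n : ℕ) (hm : 0 < m) (hn : 0 < n)
    (uL : Fin m → Fin n → ℝ) (hbound : ∀ i j, uL i j ∈ Set.Icc (-1 : ℝ) 1)
    (M1 M2 : Set (Fin m × Fin n → ℝ))
    (h1sub : M1 ⊆ stdSimplex ℝ (Fin m × Fin n)) (h1c : IsCompact M1)
    (h1v : Convex ℝ M1) (h1ne : M1.Nonempty)
    (h2sub : M2 ⊆ stdSimplex ℝ (Fin m × Fin n)) (h2c : IsCompact M2)
    (h2v : Convex ℝ M2) (h2ne : M2.Nonempty)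
    (hdistinct : M1 ≠ M2)
    (hplus : MplusSet uL M1 = MplusSet uL M2)
    (hcase : (M2 \ M1).Nonempty ∨ MminusSet uL M1 = MminusSet uL M2) :
    (∃ uO : Fin m → Fin n → ℝ, VL uL uO M2 < VL uL uO M1) ∧
      ¬ ParetoDominates uL M2 M1 :=
  non_dominance_of_distinct_menus_general m n uL M1 M2 h1c h1v h1ne h2c h2v h2ne hdistinct hplus
    hcase
end
end
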